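/- Let 0 < Y < 2 and define J_Y(λ) = √(λ/(2π)) ∫_0^∞ e^{−λh/2} h^{(Y−1)/2} (1+h)^{−Y/2} dh for λ > 0. Then J_Y(λ) ≤ 1 for every λ > 0. -/

import Mathlib

open MeasureTheory Real Set

/-- `J_Y(λ) = √(λ/(2π)) ∫_0^∞ e^{-λh/2} h^{(Y-1)/2} (1+h)^{-Y/2} dh`. -/
noncomputable def JFun (Y l : ℝ) : ℝ :=
  Real.sqrt (l / (2 * π)) *
    ∫ h in Ioi (0:ℝ), Real.exp (-(l * h / 2)) * h ^ ((Y-1)/2) * (1+h) ^ (-(Y/2))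

/-!
Since `(h / (1 + h)) ^ (Y/2) ≤ 1`, the integrand is dominated by `h^{-1/2} e^{-λh/2}`, whose
integral over `(0, ∞)` is `Γ(1/2) √(2/λ) = √(2π/λ)`; this exactly cancels the prefactor.
-/

lemma integrableOn_rpow_neg_one_half_mul_exp_neg_mul {r : ℝ} (hr : 0 < r) :
    IntegrableOn (fun h : ℝ => h ^ (-(1 / 2 : ℝ)) * exp (-(r * h))) (Ioi 0) := by
  refine (integrableOn_rpow_mul_exp_neg_mul_rpow (p := 1) (s := -(1 / 2 : ℝ)) (by norm_num)
    zero_lt_one hr).congr_fun (fun h _ => ?_) measurableSet_Ioi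
  simp only [rpow_one, neg_mul]

lemma integral_Ioi_rpow_neg_one_half_mul_exp_neg_mul {r : ℝ} (hr : 0 < r) :
    ∫ h in Ioi (0 : ℝ), h ^ (-(1 / 2 : ℝ)) * exp (-(r * h)) = √(π / r) := by
  have hGamma := integral_rpow_mul_exp_neg_mul_Ioi (a := 1 / 2) (by norm_num) hr
  rw [Gamma_one_half_eq, ← sqrt_eq_rpow, ← sqrt_mul (by positivity), one_div_mul_eq_div] at hGamma
  rw [← hGamma]
  refine setIntegral_congr_fun measurableSet_Ioi (fun h _ => ?_)
  norm_num

lemma rpow_add_mul_one_add_rpow_neg_le {x a : ℝ} (hx : 0 < x) (ha : 0 ≤ a) (b : ℝ) :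
    x ^ (b + a) * (1 + x) ^ (-a) ≤ x ^ b := by
  have hshift : (1 + x) ^ (-a) ≤ x ^ (-a) :=
    rpow_le_rpow_of_nonpos hx (by linarith) (neg_nonpos.mpr ha)
  calc x ^ (b + a) * (1 + x) ^ (-a) ≤ x ^ (b + a) * x ^ (-a) := by gcongr
    _ = x ^ b := by rw [← rpow_add hx, add_neg_cancel_right]

theorem JFun_le_one (Y : ℝ) (hY0 : 0 < Y) :
    ∀ l : ℝ, 0 < l → JFun Y l ≤ 1 := by
  intro l hl
  have hl2 : 0 < l / 2 := half_pos hl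
  have hdominated : ∀ h ∈ Ioi (0 : ℝ), exp (-(l * h / 2)) * h ^ ((Y - 1) / 2) * (1 + h) ^ (-(Y / 2))
      ≤ h ^ (-(1 / 2 : ℝ)) * exp (-(l / 2 * h)) := fun h (hh : 0 < h) => by
    have hweight := rpow_add_mul_one_add_rpow_neg_le hh (half_pos hY0).le (-(1 / 2))
    rw [show -(1 / 2) + Y / 2 = (Y - 1) / 2 by ring] at hweight
    rw [mul_assoc, mul_comm, mul_div_right_comm]
    exact mul_le_mul_of_nonneg_right hweight (exp_pos _).le
  have hintegral : ∫ h in Ioi (0 : ℝ), exp (-(l * h / 2)) * h ^ ((Y - 1) / 2) * (1 + h) ^ (-(Y / 2))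
      ≤ √(π / (l / 2)) := by
    rw [← integral_Ioi_rpow_neg_one_half_mul_exp_neg_mul hl2]
    refine integral_mono_of_nonneg ?_ (integrableOn_rpow_neg_one_half_mul_exp_neg_mul hl2)
      ((ae_restrict_iff' measurableSet_Ioi).mpr (ae_of_all _ hdominated))
    filter_upwards [ae_restrict_mem measurableSet_Ioi] with h (hh : 0 < h)
    positivity
  calc JFun Y l ≤ √(l / (2 * π)) * √(π / (l / 2)) := by
        unfold JFun; gcongr
    _ = 1 := by
        rw [← sqrt_mul (by positivity), show l / (2 * π) * (π / (l / 2)) = 1 by field_simp]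
        exact sqrt_one
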